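/- The function φ₁ tends to 9/4 as u → (1/√3)⁺ and tends to 3/4 as u → (√3)⁻; the function φ₂ tends to 3/4 as u → (1/√3)⁺ and tends to 9/4 as u → (√3)⁻ (limits taken within the open interval (1/√3, √3)). -/

import Mathlib

noncomputable def mParam (u : ℝ) : ℝ :=
  (8 * u ^ 3 - u ^ 3 * (1 + u ^ 2) ^ ((3 : ℝ) / 2)) /
    (8 * u ^ 3 - (1 + u ^ 2) ^ ((3 : ℝ) / 2))

noncomputable def alphaParam (u : ℝ) : ℝ :=
  Real.sqrt (2 * mParam u * u ^ 2 + 2)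

noncomputable def muParam (u : ℝ) : ℝ :=
  4 * mParam u * alphaParam u / Real.sqrt (1 + u ^ 2) +
    alphaParam u * (mParam u) ^ 2 / (2 * u) + alphaParam u / 2

noncomputable def phi1 (u : ℝ) : ℝ :=
  1 + 2 * (mParam u + 1) * (alphaParam u) ^ 3 * (2 - u ^ 2) /
    (muParam u * (1 + u ^ 2) ^ ((5 : ℝ) / 2))

noncomputable def phi2 (u : ℝ) : ℝ :=
  1 + 2 * (mParam u + 1) * (alphaParam u) ^ 3 * (2 * u ^ 2 - 1) /
    (muParam u * (1 + u ^ 2) ^ ((5 : ℝ) / 2))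

noncomputable def psi1 (u : ℝ) : ℝ :=
  1 + (4 * alphaParam u / muParam u) *
    ((2 * (mParam u) ^ 2 * u ^ 4 + (6 * mParam u - (mParam u) ^ 2 - 1) * u ^ 2 + 2) /
        (1 + u ^ 2) ^ ((5 : ℝ) / 2) -
      mParam u * u ^ 2 / 8 - mParam u / (8 * u ^ 3))

noncomputable def psi2 (u : ℝ) : ℝ :=
  1 + (4 * alphaParam u / muParam u) *
    ((-(mParam u) ^ 2 * u ^ 4 + (2 * (mParam u) ^ 2 - 6 * mParam u + 2) * u ^ 2 - 1) /
        (1 + u ^ 2) ^ ((5 : ℝ) / 2) +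
      mParam u * u ^ 2 / 4 + mParam u / (4 * u ^ 3))

/-!
Both `φ₁` and `φ₂` are `1 + q(u) R(u)` for the common factor `R = 2(m+1)α³ / (μ (1+u²)^(5/2))`
and the polynomials `q = 2 - u²`, `q = 2u² - 1`. Write `s = √(1+u²)`.
At `u = √3` we have `s = 2` and `m = 0`, so everything is continuous there and `R(√3) = 1/4`.
At `u = 1/√3` we have `s³ = 8u³`, the denominator of `m` vanishes and `m → ∞`. Since `μ` is `α`
times a polynomial in `m` and `α² = 2mu² + 2`, the factor `R` is a rational function of `u`, `s`
and `n = 1/m` that is continuous at `n = 0`, with value `8u³/s⁵ = 3/4` at `u = 1/√3`.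
-/

open Real Filter Set Topology

lemma one_add_sq_rpow_eq_sqrt_pow (u r : ℝ) : (1 + u ^ 2) ^ (r / 2) = √(1 + u ^ 2) ^ r :=
  rpow_div_two_eq_sqrt r (by positivity)

lemma mParam_eq (u : ℝ) :
    mParam u = u ^ 3 * (8 - √(1 + u ^ 2) ^ 3) / (8 * u ^ 3 - √(1 + u ^ 2) ^ 3) := by
  rw [mParam, one_add_sq_rpow_eq_sqrt_pow, rpow_ofNat, mul_sub, mul_comm]

lemma mParam_pos {u : ℝ} (hu : u ∈ Ioo (1 / √3) √3) : 0 < mParam u := by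
  obtain ⟨hlo, hhi⟩ := hu
  have hu0 : 0 < u := lt_trans (by positivity) hlo
  have hlo' : 1 < 3 * u ^ 2 := by
    rw [div_lt_iff₀ (by positivity)] at hlo
    nlinarith [sq_sqrt (show (0:ℝ) ≤ 3 by norm_num), sqrt_nonneg 3]
  have hhi' : u ^ 2 < 3 := by nlinarith [sq_sqrt (show (0:ℝ) ≤ 3 by norm_num), sqrt_nonneg 3]
  have hs := sqrt_nonneg (1 + u ^ 2)
  have hs_lt_two_mul : √(1 + u ^ 2) < 2 * u := (sqrt_lt' (by positivity)).2 (by nlinarith)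
  have hs_lt_two : √(1 + u ^ 2) < 2 := (sqrt_lt' (by positivity)).2 (by nlinarith)
  rw [mParam_eq]
  apply div_pos
  · exact mul_pos (by positivity) (by nlinarith [pow_lt_pow_left₀ hs_lt_two hs three_ne_zero])
  · nlinarith [pow_lt_pow_left₀ hs_lt_two_mul hs three_ne_zero]

noncomputable def phiFactor (u : ℝ) : ℝ :=
  2 * (mParam u + 1) * alphaParam u ^ 3 / (muParam u * (1 + u ^ 2) ^ ((5 : ℝ) / 2))

lemma phi1_eq (u : ℝ) : phi1 u = 1 + (2 - u ^ 2) * phiFactor u := by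
  rw [phi1, phiFactor]; ring

lemma phi2_eq (u : ℝ) : phi2 u = 1 + (2 * u ^ 2 - 1) * phiFactor u := by
  rw [phi2, phiFactor]; ring

lemma phiFactor_eq (u : ℝ) :
    phiFactor u = 2 * (mParam u + 1) * alphaParam u ^ 3 / (muParam u * √(1 + u ^ 2) ^ 5) := by
  rw [phiFactor, one_add_sq_rpow_eq_sqrt_pow, rpow_ofNat]

lemma sqrt_one_add_sqrt_three_sq : √(1 + √3 ^ 2) = 2 := by
  rw [sq_sqrt (by norm_num), show (1 + 3 : ℝ) = 2 ^ 2 by norm_num, sqrt_sq zero_le_two]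

lemma mParam_sqrt_three : mParam √3 = 0 := by
  rw [mParam_eq, sqrt_one_add_sqrt_three_sq]; norm_num

lemma alphaParam_sqrt_three : alphaParam √3 = √2 := by
  simp [alphaParam, mParam_sqrt_three]

lemma muParam_sqrt_three : muParam √3 = √2 / 2 := by
  simp [muParam, mParam_sqrt_three, alphaParam_sqrt_three]

lemma continuousAt_mParam_sqrt_three : ContinuousAt mParam √3 := by
  rw [show mParam = _ from funext mParam_eq]
  refine ContinuousAt.div (by fun_prop) (by fun_prop) ?_
  rw [sqrt_one_add_sqrt_three_sq]
  nlinarith [sq_sqrt (show (0:ℝ) ≤ 3 by norm_num), sqrt_nonneg 3]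

lemma tendsto_phiFactor_sqrt_three : Tendsto phiFactor (𝓝 √3) (𝓝 (1 / 4)) := by
  have hm := continuousAt_mParam_sqrt_three
  have hα : ContinuousAt alphaParam √3 := by unfold alphaParam; fun_prop
  have hμ : ContinuousAt muParam √3 := by unfold muParam; fun_prop (disch := positivity)
  have hden : muParam √3 * √(1 + √3 ^ 2) ^ 5 ≠ 0 := by rw [muParam_sqrt_three]; positivity
  have hcont : ContinuousAt (fun u => 2 * (mParam u + 1) * alphaParam u ^ 3 /
      (muParam u * √(1 + u ^ 2) ^ 5)) √3 := by fun_prop (disch := exact hden)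
  rw [show phiFactor = _ from funext phiFactor_eq]
  convert hcont.tendsto using 2
  rw [mParam_sqrt_three, alphaParam_sqrt_three, muParam_sqrt_three, sqrt_one_add_sqrt_three_sq]
  field_simp
  rw [sq_sqrt zero_le_two]; norm_num

/-- `phiFactor` in the variable `n = 1 / mParam u`; `mParam` blows up at the left endpoint,
where `n` tends to `0`. -/
noncomputable def phiFactorInv (u n : ℝ) : ℝ :=
  8 * u * (1 + n) * (u ^ 2 + n) /
    ((8 * n * u + √(1 + u ^ 2) + n ^ 2 * u * √(1 + u ^ 2)) * √(1 + u ^ 2) ^ 4)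

lemma phiFactor_eq_phiFactorInv {u : ℝ} (hu : u ∈ Ioo (1 / √3) √3) :
    phiFactor u = phiFactorInv u (mParam u)⁻¹ := by
  have hu0 : 0 < u := lt_trans (by positivity) hu.1
  have hm := mParam_pos hu
  have hα : 0 < alphaParam u := sqrt_pos.2 (by positivity)
  have hα2 : alphaParam u ^ 2 = 2 * mParam u * u ^ 2 + 2 := sq_sqrt (by positivity)
  have hs : 0 < √(1 + u ^ 2) := sqrt_pos.2 (by positivity)
  rw [phiFactor_eq, phiFactorInv, muParam, pow_succ, hα2]
  field_simp
  ring

lemma sqrt_one_add_one_div_sqrt_three_sq : √(1 + (1 / √3) ^ 2) = 2 / √3 := by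
  rw [sqrt_eq_iff_eq_sq (by positivity) (by positivity), div_pow, div_pow, sq_sqrt (by norm_num)]
  norm_num

lemma tendsto_inv_mParam_one_div_sqrt_three :
    Tendsto (fun u => (mParam u)⁻¹) (𝓝 (1 / √3)) (𝓝 0) := by
  have hden : (1 / √3) ^ 3 * (8 - √(1 + (1 / √3) ^ 2) ^ 3) ≠ 0 := by
    have h2 : 2 / √3 < 2 := div_lt_self two_pos (lt_sqrt_of_sq_lt (by norm_num))
    have h8 : (2 / √3) ^ 3 < 8 :=
      (pow_lt_pow_left₀ h2 (by positivity) three_ne_zero).trans_eq (by norm_num)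
    rw [sqrt_one_add_one_div_sqrt_three_sq]
    exact mul_ne_zero (by positivity) (sub_ne_zero.2 h8.ne')
  have hcont : ContinuousAt (fun u => (8 * u ^ 3 - √(1 + u ^ 2) ^ 3) /
      (u ^ 3 * (8 - √(1 + u ^ 2) ^ 3))) (1 / √3) := by fun_prop (disch := exact hden)
  simp_rw [mParam_eq, inv_div]
  convert hcont.tendsto using 2
  rw [sqrt_one_add_one_div_sqrt_three_sq]
  ring

lemma continuousAt_phiFactorInv (u : ℝ) :
    ContinuousAt (Function.uncurry phiFactorInv) (u, 0) := by
  have hden : (8 * 0 * u + √(1 + u ^ 2) + 0 ^ 2 * u * √(1 + u ^ 2)) * √(1 + u ^ 2) ^ 4 ≠ 0 := by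
    ring_nf; positivity
  unfold Function.uncurry phiFactorInv
  fun_prop (disch := exact hden)

lemma tendsto_phiFactor_one_div_sqrt_three :
    Tendsto phiFactor (𝓝[Ioo (1 / √3) √3] (1 / √3)) (𝓝 (3 / 4)) := by
  have hpair : Tendsto (fun u => (u, (mParam u)⁻¹)) (𝓝 (1 / √3)) (𝓝 (1 / √3, 0)) :=
    tendsto_id.prodMk_nhds tendsto_inv_mParam_one_div_sqrt_three
  have hlim := (continuousAt_phiFactorInv (1 / √3)).tendsto.comp hpair
  have hval : Function.uncurry phiFactorInv (1 / √3, 0) = 3 / 4 := by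
    simp only [Function.uncurry, phiFactorInv, sqrt_one_add_one_div_sqrt_three_sq]
    field_simp
    rw [pow_succ, sq_sqrt zero_le_three]
    ring
  rw [hval] at hlim
  refine (hlim.mono_left nhdsWithin_le_nhds).congr' ?_
  filter_upwards [self_mem_nhdsWithin] with u hu
  exact (phiFactor_eq_phiFactorInv hu).symm

/-- Limits of `φ₁` and `φ₂` at the endpoints of `(1/√3, √3)`. -/
theorem phi_limits :
    Filter.Tendsto phi1
      (nhdsWithin (1 / Real.sqrt 3) (Set.Ioo (1 / Real.sqrt 3) (Real.sqrt 3)))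
      (nhds (9 / 4)) ∧
    Filter.Tendsto phi1
      (nhdsWithin (Real.sqrt 3) (Set.Ioo (1 / Real.sqrt 3) (Real.sqrt 3)))
      (nhds (3 / 4)) ∧
    Filter.Tendsto phi2
      (nhdsWithin (1 / Real.sqrt 3) (Set.Ioo (1 / Real.sqrt 3) (Real.sqrt 3)))
      (nhds (3 / 4)) ∧
    Filter.Tendsto phi2
      (nhdsWithin (Real.sqrt 3) (Set.Ioo (1 / Real.sqrt 3) (Real.sqrt 3)))
      (nhds (9 / 4)) := by
  have hleft := tendsto_phiFactor_one_div_sqrt_three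
  have hright := tendsto_phiFactor_sqrt_three.mono_left
    (nhdsWithin_le_nhds (s := Ioo (1 / √3) √3))
  have hu {a : ℝ} : Tendsto (fun u : ℝ => u) (𝓝[Ioo (1 / √3) √3] a) (𝓝 a) := nhdsWithin_le_nhds
  have h3 : √3 ^ 2 = 3 := sq_sqrt zero_le_three
  rw [show phi1 = _ from funext phi1_eq, show phi2 = _ from funext phi2_eq]
  refine ⟨?_, ?_, ?_, ?_⟩
  · convert tendsto_const_nhds.add ((tendsto_const_nhds.sub (hu.pow 2)).mul hleft) using 2
    rw [div_pow, h3]; norm_num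
  · convert tendsto_const_nhds.add ((tendsto_const_nhds.sub (hu.pow 2)).mul hright) using 2
    rw [h3]; norm_num
  · convert tendsto_const_nhds.add (((hu.pow 2).const_mul 2 |>.sub_const 1).mul hleft) using 2
    rw [div_pow, h3]; norm_num
  · convert tendsto_const_nhds.add (((hu.pow 2).const_mul 2 |>.sub_const 1).mul hright) using 2
    rw [h3]; norm_num
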